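/- arXiv:2005.09802 — 5 statements merged into one kernel-verified Lean document; each statement's English description precedes it below -/
import Mathlib

section
/- Let X and Y be real random variables with |X| <= C_1 and |Y| <= C_2 almost surely, and let A be an event with P(A) > 0 such that conditional on A, X and Y are uncorrelated (E[XY | A] = E[X|A] E[Y|A]). Then |Cov(X,Y)| <= 4 C_1 C_2 P(A^c). -/
/-!
Split every expectation along `A` and `Aᶜ`: with `p = P(A)`, `q = P(Aᶜ)` and the conditional
means `x = E[X | A]`, `y = E[Y | A]`, uncorrelatedness on `A` gives `E[XY; A] = p x y`, so
`Cov(X, Y) = p q x y + E[XY; Aᶜ] - p x E[Y; Aᶜ] - p y E[X; Aᶜ] - E[X; Aᶜ] E[Y; Aᶜ]`.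
Every term carries a factor `q`, and bounding each one by `C₁ C₂` times its weight gives
`C₁ C₂ q (2 + 2p) ≤ 4 C₁ C₂ q`.
-/

open MeasureTheory ProbabilityTheory

theorem abs_mul_le_mul_of_abs_le {x y a b : ℝ} (hx : |x| ≤ a) (hy : |y| ≤ b) :
    |x * y| ≤ a * b := by
  rw [abs_mul]
  exact mul_le_mul hx hy (abs_nonneg y) ((abs_nonneg x).trans hx)

theorem abs_mixture_cov_le {p q x y b d n C₁ C₂ : ℝ} (hp : 0 ≤ p) (hq : 0 ≤ q)
    (hpq : p + q = 1) (hx : |x| ≤ C₁) (hy : |y| ≤ C₂) (hb : |b| ≤ C₁ * q)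
    (hd : |d| ≤ C₂ * q) (hn : |n| ≤ C₁ * C₂ * q) :
    |p * (x * y) + n - (p * x + b) * (p * y + d)| ≤ 4 * C₁ * C₂ * q := by
  have hq' : q = 1 - p := by linarith
  have hC : 0 ≤ C₁ * C₂ := mul_nonneg ((abs_nonneg x).trans hx) ((abs_nonneg y).trans hy)
  have hxy := abs_le.mp (abs_mul_le_mul_of_abs_le hx hy)
  have hxd := abs_le.mp (abs_mul_le_mul_of_abs_le hx hd)
  have hby := abs_le.mp (abs_mul_le_mul_of_abs_le hb hy)
  have hbd := abs_le.mp (abs_mul_le_mul_of_abs_le hb hd)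
  have hn' := abs_le.mp hn
  calc |p * (x * y) + n - (p * x + b) * (p * y + d)|
      = |p * q * (x * y) + n - p * (x * d) - p * (b * y) - b * d| := by
        rw [hq']; congr 1; ring
    _ ≤ p * q * (C₁ * C₂) + C₁ * C₂ * q + p * (C₁ * (C₂ * q)) + p * (C₁ * q * C₂)
        + C₁ * q * (C₂ * q) := by
        have hpq₀ : 0 ≤ p * q := mul_nonneg hp hq
        rw [abs_le]
        constructor <;> nlinarith
    _ = 4 * C₁ * C₂ * q - 2 * (C₁ * C₂) * q * q := by
        rw [hq']; ring
    _ ≤ 4 * C₁ * C₂ * q := by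
        nlinarith [mul_nonneg hC (mul_nonneg hq hq)]

section Conditional

variable {Ω E : Type*} [MeasurableSpace Ω] [NormedAddCommGroup E] [NormedSpace ℝ E]
  {μ : Measure Ω} {A : Set Ω}

theorem measureReal_smul_integral_cond [IsFiniteMeasure μ] (f : Ω → E) :
    μ.real A • ∫ ω, f ω ∂μ[|A] = ∫ ω in A, f ω ∂μ := by
  rw [ProbabilityTheory.cond, integral_smul_measure, ENNReal.toReal_inv, smul_smul]
  by_cases hA : μ A = 0
  · rw [Measure.restrict_eq_zero.mpr hA, integral_zero_measure, smul_zero]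
  · rw [Measure.real, mul_inv_cancel₀ (ENNReal.toReal_ne_zero.mpr ⟨hA, measure_ne_top μ A⟩),
      one_smul]

theorem integral_eq_measureReal_smul_integral_cond_add_compl [IsFiniteMeasure μ]
    (hA : MeasurableSet A) {f : Ω → E} (hf : Integrable f μ) :
    ∫ ω, f ω ∂μ = μ.real A • ∫ ω, f ω ∂μ[|A] + ∫ ω in Aᶜ, f ω ∂μ := by
  rw [measureReal_smul_integral_cond, integral_add_compl hA hf]

end Conditional

theorem abs_integral_le_of_ae_abs_le {Ω : Type*} [MeasurableSpace Ω] {ν : Measure Ω}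
    [IsZeroOrProbabilityMeasure ν] {f : Ω → ℝ} {C : ℝ} (hC : 0 ≤ C)
    (hf : ∀ᵐ ω ∂ν, |f ω| ≤ C) : |∫ ω, f ω ∂ν| ≤ C :=
  (Real.norm_eq_abs _ ▸ norm_integral_le_of_norm_le_const hf).trans
    (mul_le_of_le_one_right hC measureReal_le_one)

theorem stmt_9_general {Ω : Type*} [MeasurableSpace Ω] (μ : Measure Ω) [IsProbabilityMeasure μ]
    (X Y : Ω → ℝ) (hX : Measurable X) (hY : Measurable Y)
    (C₁ C₂ : ℝ)
    (hbX : ∀ᵐ ω ∂μ, |X ω| ≤ C₁) (hbY : ∀ᵐ ω ∂μ, |Y ω| ≤ C₂)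
    (A : Set Ω) (hA : MeasurableSet A)
    (huncorr : ∫ ω, X ω * Y ω ∂(μ[|A])
      = (∫ ω, X ω ∂(μ[|A])) * (∫ ω, Y ω ∂(μ[|A]))) :
    |(∫ ω, X ω * Y ω ∂μ) - (∫ ω, X ω ∂μ) * (∫ ω, Y ω ∂μ)|
      ≤ 4 * C₁ * C₂ * (μ Aᶜ).toReal := by
  have hbXY : ∀ᵐ ω ∂μ, |X ω * Y ω| ≤ C₁ * C₂ := by
    filter_upwards [hbX, hbY] with ω using abs_mul_le_mul_of_abs_le
  have integral_split {f : Ω → ℝ} {C : ℝ} (hf : Measurable f)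
      (hfC : ∀ᵐ ω ∂μ, |f ω| ≤ C) :=
    integral_eq_measureReal_smul_integral_cond_add_compl hA
      (Integrable.of_bound hf.aestronglyMeasurable C hfC)
  have bound_cond {f : Ω → ℝ} {C : ℝ} (hfC : ∀ᵐ ω ∂μ, |f ω| ≤ C) :
      |∫ ω, f ω ∂μ[|A]| ≤ C :=
    let ⟨_, hC⟩ := hfC.exists
    abs_integral_le_of_ae_abs_le ((abs_nonneg _).trans hC) (cond_absolutelyContinuous.ae_le hfC)
  have bound_compl {f : Ω → ℝ} {C : ℝ} (hfC : ∀ᵐ ω ∂μ, |f ω| ≤ C) :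
      |∫ ω in Aᶜ, f ω ∂μ| ≤ C * μ.real Aᶜ :=
    Real.norm_eq_abs _ ▸
      norm_setIntegral_le_of_norm_le_const_ae (measure_lt_top μ _) (ae_restrict_of_ae hfC)
  rw [integral_split (f := fun ω => X ω * Y ω) (hX.mul hY) hbXY, integral_split hX hbX,
    integral_split hY hbY, huncorr]
  simp only [smul_eq_mul]
  exact abs_mixture_cov_le measureReal_nonneg measureReal_nonneg
    ((measureReal_add_measureReal_compl hA).trans probReal_univ)
    (bound_cond hbX) (bound_cond hbY) (bound_compl hbX) (bound_compl hbY) (bound_compl hbXY)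

/-- If `|X| ≤ C₁` and `|Y| ≤ C₂` a.s., and conditional on an event `A`
the variables `X` and `Y` are uncorrelated, then `|Cov(X,Y)| ≤ 4 C₁ C₂ P(Aᶜ)`. -/
theorem stmt_9 {Ω : Type*} [MeasurableSpace Ω] (μ : Measure Ω) [IsProbabilityMeasure μ]
    (X Y : Ω → ℝ) (hX : Measurable X) (hY : Measurable Y)
    (C₁ C₂ : ℝ)
    (hbX : ∀ᵐ ω ∂μ, |X ω| ≤ C₁) (hbY : ∀ᵐ ω ∂μ, |Y ω| ≤ C₂)
    (A : Set Ω) (hA : MeasurableSet A) (hApos : μ A ≠ 0)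
    (huncorr : ∫ ω, X ω * Y ω ∂(μ[|A])
      = (∫ ω, X ω ∂(μ[|A])) * (∫ ω, Y ω ∂(μ[|A]))) :
    |(∫ ω, X ω * Y ω ∂μ) - (∫ ω, X ω ∂μ) * (∫ ω, Y ω ∂μ)|
      ≤ 4 * C₁ * C₂ * (μ Aᶜ).toReal :=
  stmt_9_general μ X Y hX hY C₁ C₂ hbX hbY A hA huncorr
end

section
/- Let X = sum_{i=1}^n X_i be a sum of non-negative random variables with E[X] > 0. Let I be a random index independent mechanism with P(I = i) = E[X_i] / E[X], and let X* = sum_j X_j' where conditional on I = i, X_i' has the size-bias distribution of X_i and the conditional law of (X_1',...,X_n') given I = i and X_i' = x equals the conditional law of (X_1,...,X_n) given X_i = x. Then X* has the size-bias distribution of X, i.e., P(X* = x) = x P(X = x) / E[X] for all x. -/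
open MeasureTheory

/-! Split the event `{X* = x}` according to the value of `I`. Applying the coupling identity to
`A = {X = x}` turns the `i`-th piece into `E[Xᵢ; X = x]`, and these sum to
`E[X; X = x] = x P(X = x)`. -/

theorem measurableSet_sum_eq {ι : Type*} [Fintype ι] (x : ℝ) :
    MeasurableSet {f : ι → ℝ | ∑ j, f j = x} :=
  (Finset.measurable_sum _ fun j _ => measurable_pi_apply j) (measurableSet_singleton x)

theorem measureReal_preimage_snd_eq_sum {ι α : Type*} [Fintype ι] [MeasurableSpace ι]
    [MeasurableSingletonClass ι] [MeasurableSpace α] (ν : Measure (ι × α)) [IsFiniteMeasure ν]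
    (A : Set α) :
    ν.real (Prod.snd ⁻¹' A) = ∑ i, ν.real {p | p.1 = i ∧ p.2 ∈ A} := by
  have hfiber (i : ι) : ν.restrict (Prod.snd ⁻¹' A) (Prod.fst ⁻¹' {i})
      = ν {p | p.1 = i ∧ p.2 ∈ A} :=
    Measure.restrict_apply (measurable_fst (measurableSet_singleton i))
  have := sum_measure_preimage_singleton (μ := ν.restrict (Prod.snd ⁻¹' A)) Finset.univ
    (f := Prod.fst) fun i _ => measurable_fst (measurableSet_singleton i)
  simp only [hfiber, Finset.coe_univ, Set.preimage_univ, Measure.restrict_apply_univ] at this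
  simp only [measureReal_def, ← this, ENNReal.toReal_sum fun i _ => measure_ne_top ν _]

theorem integrableOn_apply_of_sum_eq {ι : Type*} [Fintype ι] (μ : Measure (ι → ℝ))
    [IsFiniteMeasure μ] (hnonneg : ∀ᵐ f ∂μ, ∀ i, 0 ≤ f i) (i : ι) (x : ℝ) :
    IntegrableOn (fun f => f i) {f | ∑ j, f j = x} μ := by
  refine Integrable.mono' (integrable_const |x|) (measurable_pi_apply i).aestronglyMeasurable ?_
  filter_upwards [ae_restrict_of_ae hnonneg, ae_restrict_mem (measurableSet_sum_eq x)] with f hf hfx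
  rw [Real.norm_eq_abs, abs_of_nonneg (hf i)]
  calc f i ≤ ∑ j, f j := Finset.single_le_sum (fun j _ => hf j) (Finset.mem_univ i)
    _ = x := hfx
    _ ≤ |x| := le_abs_self x

theorem setIntegral_sum_eq_mul_measureReal {ι : Type*} [Fintype ι] (μ : Measure (ι → ℝ)) (x : ℝ) :
    ∫ f in {f | ∑ j, f j = x}, ∑ j, f j ∂μ = x * μ.real {f | ∑ j, f j = x} := by
  rw [setIntegral_congr_fun (measurableSet_sum_eq x) fun f hf => hf, setIntegral_const, smul_eq_mul, mul_comm]

theorem stmt_10_general (n : ℕ)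
    (μ : Measure (Fin n → ℝ)) [IsProbabilityMeasure μ]
    (ν : Measure (Fin n × (Fin n → ℝ))) [IsProbabilityMeasure ν]
    (hnonneg : ∀ᵐ f ∂μ, ∀ i, 0 ≤ f i)
    (m : ℝ)
    (hcoupling : ∀ (i : Fin n) (A : Set (Fin n → ℝ)), MeasurableSet A →
      (ν {p | p.1 = i ∧ p.2 ∈ A}).toReal * m = ∫ f in A, f i ∂μ) :
    ∀ x : ℝ, (ν {p | (∑ i, p.2 i) = x}).toReal * m
      = x * (μ {f | (∑ i, f i) = x}).toReal := by
  intro x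
  set A : Set (Fin n → ℝ) := {f | ∑ i, f i = x}
  have hA : MeasurableSet A := measurableSet_sum_eq x
  calc (ν (Prod.snd ⁻¹' A)).toReal * m
      = ∑ i, (ν {p | p.1 = i ∧ p.2 ∈ A}).toReal * m := by
        rw [← measureReal_def, measureReal_preimage_snd_eq_sum ν A, Finset.sum_mul]; rfl
    _ = ∑ i, ∫ f in A, f i ∂μ := Finset.sum_congr rfl fun i _ => hcoupling i A hA
    _ = ∫ f in A, ∑ i, f i ∂μ :=
        (integral_finsetSum _ fun i _ => integrableOn_apply_of_sum_eq μ hnonneg i x).symm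
    _ = x * (μ A).toReal := setIntegral_sum_eq_mul_measureReal μ x

/-- size-bias coupling for sums. Let `μ` be the joint law of the non-negative
random variables `(X₁,...,Xₙ)`, with `m = E[∑ Xᵢ] > 0`. Let `ν` be the joint law of
`(I, (X₁',...,Xₙ'))` where `P(I = i) = E[Xᵢ]/m`, conditional on `I = i` the variable `Xᵢ'`
is size-biased, and the conditional law of `(X₁',...,Xₙ')` given `I = i, Xᵢ' = x` equals
the conditional law of `(X₁,...,Xₙ)` given `Xᵢ = x`.  These hypotheses combine into the
identity `P(I = i, X' ∈ A) · m = E[Xᵢ 1_{X ∈ A}]` for all measurable `A`.  Then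
`X* = ∑ Xᵢ'` has the size-bias distribution of `X = ∑ Xᵢ`:
`P(X* = x) · m = x · P(X = x)` for every `x`. -/
theorem stmt_10 (n : ℕ)
    (μ : Measure (Fin n → ℝ)) [IsProbabilityMeasure μ]
    (ν : Measure (Fin n × (Fin n → ℝ))) [IsProbabilityMeasure ν]
    (hnonneg : ∀ᵐ f ∂μ, ∀ i, 0 ≤ f i)
    (m : ℝ) (hm : 0 < m)
    (hmean : ∫ f, (∑ i, f i) ∂μ = m)
    (hcoupling : ∀ (i : Fin n) (A : Set (Fin n → ℝ)), MeasurableSet A →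
      (ν {p | p.1 = i ∧ p.2 ∈ A}).toReal * m = ∫ f in A, f i ∂μ) :
    ∀ x : ℝ, (ν {p | (∑ i, p.2 i) = x}).toReal * m
      = x * (μ {f | (∑ i, f i) = x}).toReal :=
  stmt_10_general n μ ν hnonneg m hcoupling
end

section
/- Let w be Mallows distributed on S_n with parameter q in (0,1], let C be a subset of [n], and let (a_i)_{i in C} be distinct elements of [n]. Let w' be the unique permutation with w'(i) = a_i for i in C and w'(i) < w'(j) for all i < j not in C. Then P(w(i) = a_i for all i in C) <= q^{l(w')} [n - |C|]_q! / [n]_q!. -/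
/-!
For `w` agreeing with `w'` on `C`, split the inversions of `w` into pairs inside `C` (the same as
for `w'`), pairs with exactly one entry in `C`, and pairs inside the free positions `s = Cᶜ`. The
last kind is counted by the Lehmer code of `w` read on `s`, which vanishes for `w'`. For `c ∈ C`,
the mixed inversions at `c` number `#{right of c} + #{values above w c} - 2 · #{right of c with
value above w c}`, and the increasing filling `w'` maximizes the subtracted count. Hence
`l(w) ≥ l(w') + Σᵢ codeᵢ(w)`. The code determines `w` in the fiber and `codeᵢ ≤ #{j ∈ s | i < j}`,
so `Σ_w q^{Σ code}` is at most `∏_{i ∈ s} [#{j ∈ s | i < j} + 1]_q = [|s|]_q!`.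
-/

/-- Number of inversions of a permutation of `Fin n`. -/
def invCount (n : ℕ) (w : Equiv.Perm (Fin n)) : ℕ :=
  (Finset.univ.filter (fun p : Fin n × Fin n => p.1 < p.2 ∧ w p.2 < w p.1)).card

/-- The q-factorial `[m]_q! = ∏_{i=1}^m (1 + q + ⋯ + q^{i-1})`. -/
noncomputable def qFactorial (q : ℝ) (m : ℕ) : ℝ :=
  ∏ i ∈ Finset.Icc 1 m, (∑ j ∈ Finset.range i, q ^ j)

/-- The Mallows probability of `w`: `q^{l(w)} / [n]_q!`. -/
noncomputable def mallows (q : ℝ) (n : ℕ) (w : Equiv.Perm (Fin n)) : ℝ :=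
  q ^ invCount n w / qFactorial q n

/-- Number of descents of a permutation of `Fin n`: positions `i` (0-based) with a
successor `j = i+1` such that `w j < w i`. -/
def desCount (n : ℕ) (w : Equiv.Perm (Fin n)) : ℕ :=
  (Finset.univ.filter
    (fun p : Fin n × Fin n => (p.2 : ℕ) = (p.1 : ℕ) + 1 ∧ w p.2 < w p.1)).card

open Finset

section Rank

variable {α : Type*} [LinearOrder α]

lemma card_filter_lt_lt_of_lt {s : Finset α} {x y : α} (hx : x ∈ s) (hxy : x < y) :
    #{v ∈ s | v < x} < #{v ∈ s | v < y} := by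
  refine card_lt_card <| (ssubset_iff_of_subset fun v hv => ?_).mpr ⟨x, ?_, ?_⟩
  · simp only [mem_filter] at hv ⊢
    exact ⟨hv.1, hv.2.trans hxy⟩
  · simp [hx, hxy]
  · simp

lemma eq_of_card_filter_lt_eq {s : Finset α} {x y : α} (hx : x ∈ s) (hy : y ∈ s)
    (h : #{v ∈ s | v < x} = #{v ∈ s | v < y}) : x = y := by
  rcases lt_trichotomy x y with hxy | rfl | hxy
  · exact absurd h (card_filter_lt_lt_of_lt hx hxy).ne
  · rfl
  · exact absurd h (card_filter_lt_lt_of_lt hy hxy).ne'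

lemma prod_card_filter_lt_add_one {M : Type*} [CommMonoid M] (s : Finset α) (f : ℕ → M) :
    ∏ i ∈ s, f (#{j ∈ s | i < j} + 1) = ∏ k ∈ Icc 1 #s, f k := by
  induction s using Finset.induction_on_min with
  | empty => simp
  | insert a s ha ih =>
    have has : a ∉ s := fun h => lt_irrefl a (ha a h)
    rw [prod_insert has, card_insert_of_notMem has, prod_Icc_succ_top (by omega), ← ih,
      mul_comm, filter_insert, if_neg (lt_irrefl a), filter_true_of_mem ha]
    congr 1
    refine prod_congr rfl fun i hi => ?_
    rw [filter_insert, if_neg (ha i hi).not_gt]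

end Rank

section CrossInversions

variable {ι α : Type*} [LinearOrder ι] [LinearOrder α]

def crossInversions (S : Finset ι) (f : ι → α) (c : ι) (v : α) : ℕ :=
  #{j ∈ S | c < j ∧ f j < v} + #{j ∈ S | j < c ∧ v < f j}

lemma crossInversions_add_two_mul {S : Finset ι} {f : ι → α} {c : ι} {v : α} (hc : c ∉ S)
    (hv : ∀ j ∈ S, f j ≠ v) :
    crossInversions S f c v + 2 * #{j ∈ S | c < j ∧ v < f j}
      = #{j ∈ S | c < j} + #{j ∈ S | v < f j} := by
  have hright : #{j ∈ S | c < j ∧ f j < v} + #{j ∈ S | c < j ∧ v < f j} = #{j ∈ S | c < j} := by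
    rw [← card_filter_add_card_filter_not (s := {j ∈ S | c < j}) (fun j => f j < v),
      filter_filter, filter_filter]
    congr 2
    refine filter_congr fun j hj => ?_
    have := hv j hj
    constructor
    · exact fun h => ⟨h.1, h.2.not_gt⟩
    · exact fun h => ⟨h.1, lt_of_le_of_ne (not_lt.mp h.2) (Ne.symm this)⟩
  have habove : #{j ∈ S | c < j ∧ v < f j} + #{j ∈ S | j < c ∧ v < f j} = #{j ∈ S | v < f j} := by
    rw [← card_filter_add_card_filter_not (s := {j ∈ S | v < f j}) (fun j => c < j),
      filter_filter, filter_filter]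
    congr 2
    · exact filter_congr fun j _ => and_comm
    · refine filter_congr fun j hj => ?_
      have : j ≠ c := fun h => hc (h ▸ hj)
      constructor
      · exact fun h => ⟨h.2, h.1.not_gt⟩
      · exact fun h => ⟨lt_of_le_of_ne (not_lt.mp h.2) this, h.1⟩
  unfold crossInversions
  omega

lemma card_filter_lt_and_lt_le_of_strictMonoOn {S : Finset ι} {f g : ι → α} {c : ι} {v : α}
    (hc : c ∉ S) (hg : StrictMonoOn g S) (hfg : #{j ∈ S | v < f j} = #{j ∈ S | v < g j}) :
    #{j ∈ S | c < j ∧ v < f j} ≤ #{j ∈ S | c < j ∧ v < g j} := by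
  by_cases hleft : ∃ k ∈ S, k < c ∧ v < g k
  · obtain ⟨k, hk, hkc, hvk⟩ := hleft
    calc #{j ∈ S | c < j ∧ v < f j} ≤ #{j ∈ S | c < j} :=
          card_le_card (monotone_filter_right _ fun _ _ h => h.1)
      _ ≤ #{j ∈ S | c < j ∧ v < g j} := by
          refine card_le_card fun j hj => ?_
          simp only [mem_filter] at hj ⊢
          exact ⟨hj.1, hj.2, hvk.trans (hg hk hj.1 (hkc.trans hj.2))⟩
  · push Not at hleft
    calc #{j ∈ S | c < j ∧ v < f j} ≤ #{j ∈ S | v < f j} :=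
          card_le_card (monotone_filter_right _ fun _ _ h => h.2)
      _ = #{j ∈ S | c < j ∧ v < g j} := by
          rw [hfg]
          refine congrArg card (filter_congr fun j hj => ⟨fun h => ⟨?_, h⟩, And.right⟩)
          exact lt_of_le_of_ne (not_lt.mp fun hjc => (hleft j hj hjc).not_gt h)
            fun hcj => hc (hcj ▸ hj)

lemma crossInversions_le_of_strictMonoOn {S : Finset ι} {f g : ι → α} {c : ι} {v : α}
    (hc : c ∉ S) (hf : ∀ j ∈ S, f j ≠ v) (hgv : ∀ j ∈ S, g j ≠ v) (hg : StrictMonoOn g S)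
    (hfg : #{j ∈ S | v < f j} = #{j ∈ S | v < g j}) :
    crossInversions S g c v ≤ crossInversions S f c v := by
  have hf' := crossInversions_add_two_mul hc hf
  have hg' := crossInversions_add_two_mul hc hgv
  have := card_filter_lt_and_lt_le_of_strictMonoOn hc hg hfg
  omega

end CrossInversions

section FreeCode

variable {α : Type*} [LinearOrder α]

open Equiv

lemma Equiv.Perm.image_compl [Fintype α] (w : Perm α) (s : Finset α) :
    sᶜ.image w = (s.image w)ᶜ := by
  ext v
  simp only [mem_image, mem_compl]
  constructor
  · rintro ⟨j, hj, rfl⟩ ⟨i, hi, hij⟩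
    exact hj (w.injective hij ▸ hi)
  · exact fun hv => ⟨w.symm v, fun hs => hv ⟨_, hs, by simp⟩, by simp⟩

lemma image_compl_eq_of_eqOn [Fintype α] {w u : Perm α} {s : Finset α} (h : Set.EqOn w u s) :
    sᶜ.image w = sᶜ.image u := by
  rw [w.image_compl, u.image_compl, image_congr h]

lemma card_filter_comp_perm (w : Perm α) (s : Finset α) (p : α → Prop) [DecidablePred p] :
    #{j ∈ s | p (w j)} = #{v ∈ s.image w | p v} := by
  rw [filter_image, card_image_of_injective _ w.injective]

def freeCode (s : Finset α) (w : Perm α) (i : α) : ℕ := #{j ∈ s | i < j ∧ w j < w i}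

lemma freeCode_lt (s : Finset α) (w : Perm α) (i : α) :
    freeCode s w i < #{j ∈ s | i < j} + 1 :=
  Nat.lt_succ_of_le <| card_le_card <| monotone_filter_right _ fun _ _ h => h.1

lemma freeCode_eq_zero_of_strictMonoOn {s : Finset α} {w : Perm α} (hw : StrictMonoOn w s)
    {i : α} (hi : i ∈ s) : freeCode s w i = 0 :=
  card_eq_zero.mpr <| filter_eq_empty_iff.mpr fun _ hj hij =>
    hij.2.not_gt (hw hi hj hij.1)

lemma freeCode_eq_card_image (s : Finset α) (w : Perm α) (i : α) :
    freeCode s w i = #{v ∈ {j ∈ s | i ≤ j}.image w | v < w i} := by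
  rw [freeCode, ← card_filter_comp_perm, filter_filter]
  refine congrArg card (filter_congr fun j _ => ⟨fun h => ⟨h.1.le, h.2⟩, fun h => ⟨?_, h.2⟩⟩)
  exact lt_of_le_of_ne h.1 fun hij => (hij ▸ h.2).false

lemma eq_of_freeCode_eq [Fintype α] {s : Finset α} {w u : Perm α} (hoff : Set.EqOn w u ↑sᶜ)
    (hcode : ∀ i ∈ s, freeCode s w i = freeCode s u i) : w = u := by
  ext i
  induction i using WellFoundedLT.induction with
  | _ i ih =>
  by_cases hi : i ∈ s
  swap
  · exact hoff (by simpa using hi)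
  set T : Finset α := {j ∈ s | i ≤ j}
  have hT : T.image w = T.image u := by
    have hagree : Set.EqOn w u ↑Tᶜ := fun j hj => by
      simp only [coe_compl, Set.mem_compl_iff, mem_coe, T, mem_filter, not_and, not_le] at hj
      by_cases hjs : j ∈ s
      · exact ih j (hj hjs)
      · exact hoff (by simpa using hjs)
    simpa using image_compl_eq_of_eqOn hagree
  have hiT : i ∈ T := mem_filter.mpr ⟨hi, le_rfl⟩
  have h := hcode i hi
  rw [freeCode_eq_card_image, freeCode_eq_card_image, hT] at h
  exact eq_of_card_filter_lt_eq (hT ▸ mem_image_of_mem w hiT) (mem_image_of_mem u hiT) h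

end FreeCode

lemma sum_prod_pow_le_prod_sum_range {R β ι : Type*} [CommSemiring R] [PartialOrder R]
    [IsOrderedRing R] [Fintype ι] [DecidableEq ι] {F : Finset β} {κ : β → ι → ℕ} {r : ι → ℕ}
    (hinj : Set.InjOn κ F) (hlt : ∀ w ∈ F, ∀ i, κ w i < r i) {q : R} (hq : 0 ≤ q) :
    ∑ w ∈ F, ∏ i, q ^ κ w i ≤ ∏ i, ∑ k ∈ range (r i), q ^ k := by
  rw [prod_univ_sum, ← sum_image (g := κ) (f := fun d => ∏ i, q ^ d i) hinj]
  refine sum_le_sum_of_subset_of_nonneg ?_ fun _ _ _ => prod_nonneg fun _ _ => pow_nonneg hq _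
  intro d hd
  obtain ⟨w, hw, rfl⟩ := mem_image.mp hd
  exact Fintype.mem_piFinset.mpr fun i => mem_range.mpr (hlt w hw i)

lemma sum_prod_pow_freeCode_le_qFactorial {α : Type*} [Fintype α] [LinearOrder α] {q : ℝ}
    (hq : 0 ≤ q) {s : Finset α} {w₀ : Equiv.Perm α} {F : Finset (Equiv.Perm α)}
    (hF : ∀ w ∈ F, Set.EqOn w w₀ ↑sᶜ) :
    ∑ w ∈ F, ∏ i ∈ s, q ^ freeCode s w i ≤ qFactorial q #s := by
  have hinj : Set.InjOn (fun w (i : s) => freeCode s w i) F := fun w hw u hu h =>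
    eq_of_freeCode_eq ((hF w hw).trans (hF u hu).symm) fun i hi => congrFun h ⟨i, hi⟩
  have key := sum_prod_pow_le_prod_sum_range hinj
    (r := fun i : s => #{j ∈ s | (i : α) < j} + 1) (fun w _ i => freeCode_lt s w i) hq
  rw [prod_coe_sort s (fun i => ∑ k ∈ range (#{j ∈ s | i < j} + 1), q ^ k)] at key
  simp only [fun w => prod_coe_sort s (fun i => q ^ freeCode s w i)] at key
  rwa [qFactorial, ← prod_card_filter_lt_add_one s]

lemma invCount_eq_add_crossInversions {n : ℕ} (C : Finset (Fin n)) (w : Equiv.Perm (Fin n)) :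
    invCount n w = (∑ i ∈ C, ∑ j ∈ C, if i < j ∧ w j < w i then 1 else 0)
      + ∑ c ∈ C, crossInversions Cᶜ w c (w c) + ∑ i ∈ Cᶜ, freeCode Cᶜ w i := by
  have hsplit : ∀ i, ∑ j, (if i < j ∧ w j < w i then 1 else 0)
      = ∑ j ∈ C, (if i < j ∧ w j < w i then 1 else 0)
        + ∑ j ∈ Cᶜ, if i < j ∧ w j < w i then 1 else 0 :=
    fun i => (sum_add_sum_compl C _).symm
  rw [invCount, card_filter, Fintype.sum_prod_type, ← sum_add_sum_compl C]
  simp_rw [hsplit, sum_add_distrib]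
  rw [sum_comm (s := Cᶜ) (t := C)]
  simp only [crossInversions, freeCode, card_filter, sum_add_distrib]
  ring

lemma invCount_add_sum_freeCode_le {n : ℕ} {C : Finset (Fin n)} {w w' : Equiv.Perm (Fin n)}
    (hw : Set.EqOn w w' C) (hw' : StrictMonoOn w' ↑Cᶜ) :
    invCount n w' + ∑ i ∈ Cᶜ, freeCode Cᶜ w i ≤ invCount n w := by
  rw [invCount_eq_add_crossInversions C w, invCount_eq_add_crossInversions C w',
    sum_eq_zero fun i hi => freeCode_eq_zero_of_strictMonoOn hw' hi, add_zero]
  have hinner : (∑ i ∈ C, ∑ j ∈ C, if i < j ∧ w' j < w' i then 1 else 0)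
      = ∑ i ∈ C, ∑ j ∈ C, if i < j ∧ w j < w i then 1 else 0 :=
    sum_congr rfl fun i hi => sum_congr rfl fun j hj => by rw [hw hi, hw hj]
  have hcross : ∑ c ∈ C, crossInversions Cᶜ w' c (w' c)
      ≤ ∑ c ∈ C, crossInversions Cᶜ w c (w c) := by
    refine sum_le_sum fun c hc => ?_
    have hne : ∀ u : Equiv.Perm (Fin n), Set.EqOn u w' C → ∀ j ∈ Cᶜ, u j ≠ w' c :=
      fun u hu j hj h => mem_compl.mp hj (u.injective (h.trans (hu hc).symm) ▸ hc)
    rw [hw hc]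
    refine crossInversions_le_of_strictMonoOn (notMem_compl.mpr hc) (hne w hw)
      (hne w' fun _ _ => rfl) hw' ?_
    rw [card_filter_comp_perm, card_filter_comp_perm, image_compl_eq_of_eqOn hw]
  omega

open scoped Classical in
theorem stmt_11_general (n : ℕ) (q : ℝ) (hq0 : 0 < q) (hq1 : q ≤ 1)
    (C : Finset (Fin n)) (a : Fin n → Fin n)
    (w' : Equiv.Perm (Fin n))
    (hw'1 : ∀ i ∈ C, w' i = a i)
    (hw'2 : ∀ i j : Fin n, i ∉ C → j ∉ C → i < j → w' i < w' j) :
    ∑ w ∈ Finset.univ.filter (fun w : Equiv.Perm (Fin n) => ∀ i ∈ C, w i = a i),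
        mallows q n w
      ≤ q ^ invCount n w' * qFactorial q (n - C.card) / qFactorial q n := by
  set F := Finset.univ.filter (fun w : Equiv.Perm (Fin n) => ∀ i ∈ C, w i = a i)
  have hF : ∀ w ∈ F, Set.EqOn w w' C := fun w hw i hi =>
    ((mem_filter.mp hw).2 i hi).trans (hw'1 i hi).symm
  have hmono : StrictMonoOn w' ↑Cᶜ := fun i hi j hj =>
    hw'2 i j (by simpa using hi) (by simpa using hj)
  have hqFac : 0 < qFactorial q n :=
    prod_pos fun i hi => sum_pos (fun j _ => pow_pos hq0 j) ⟨0, mem_range.mpr (mem_Icc.mp hi).1⟩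
  simp only [mallows, ← sum_div]
  refine div_le_div_of_nonneg_right ?_ hqFac.le
  calc ∑ w ∈ F, q ^ invCount n w
      ≤ ∑ w ∈ F, q ^ invCount n w' * ∏ i ∈ Cᶜ, q ^ freeCode Cᶜ w i :=
        sum_le_sum fun w hw => by
          rw [prod_pow_eq_pow_sum, ← pow_add]
          exact pow_le_pow_of_le_one hq0.le hq1 (invCount_add_sum_freeCode_le (hF w hw) hmono)
    _ = q ^ invCount n w' * ∑ w ∈ F, ∏ i ∈ Cᶜ, q ^ freeCode Cᶜ w i := (mul_sum ..).symm
    _ ≤ q ^ invCount n w' * qFactorial q (n - C.card) := by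
        rw [show n - #C = #Cᶜ by rw [card_compl, Fintype.card_fin]]
        gcongr
        exact sum_prod_pow_freeCode_le_qFactorial hq0.le (by simpa using hF)

open scoped Classical in
/-- Mallows probability upper bound. Let `w` be Mallows distributed on `S_n`
with parameter `0 < q ≤ 1`, `C ⊆ [n]`, and `(aᵢ)_{i ∈ C}` distinct. Let `w'` be the (unique)
permutation with `w' i = aᵢ` on `C` and increasing off `C`. Then
`P(w i = aᵢ for all i ∈ C) ≤ q^{l(w')} [n - |C|]_q! / [n]_q!`. -/
theorem stmt_11 (n : ℕ) (q : ℝ) (hq0 : 0 < q) (hq1 : q ≤ 1)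
    (C : Finset (Fin n)) (a : Fin n → Fin n) (ha : Set.InjOn a C)
    (w' : Equiv.Perm (Fin n))
    (hw'1 : ∀ i ∈ C, w' i = a i)
    (hw'2 : ∀ i j : Fin n, i ∉ C → j ∉ C → i < j → w' i < w' j) :
    ∑ w ∈ Finset.univ.filter (fun w : Equiv.Perm (Fin n) => ∀ i ∈ C, w i = a i),
        mallows q n w
      ≤ q ^ invCount n w' * qFactorial q (n - C.card) / qFactorial q n :=
  stmt_11_general n q hq0 hq1 C a w' hw'1 hw'2
end

section
/- Let w be Mallows distributed on S_n with parameter 0 < q <= 1. Then for any i in [n-1], P(w(i) > w(i+1)) = q/(1+q), i.e., each descent indicator des_i(w) is Bernoulli with parameter q/(1+q). -/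
/-!
Right multiplication by the adjacent transposition `s = (i j)`, `j = i + 1`, maps the
permutations with `w i < w j` bijectively onto those with a descent at `i` and raises the
inversion number by exactly one, so the `q^{l(w)}`-weight of the descents is `q` times that of
the ascents. It remains to see that the total weight `∑ q^{l(w)}` is `[n]_q!`: inserting the
largest value `n` at position `k` into a permutation of `S_{n-1}` creates `n - k` new
inversions, which gives the factor `1 + q + ⋯ + q^{n-1}`.
-/

open Finset Equiv

def invSet {n : ℕ} (w : Perm (Fin n)) : Finset (Fin n × Fin n) :=
  univ.filter fun p => p.1 < p.2 ∧ w p.2 < w p.1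

lemma invCount_eq_card_invSet {n : ℕ} (w : Perm (Fin n)) : invCount n w = #(invSet w) := rfl

@[simp] lemma mem_invSet {n : ℕ} {w : Perm (Fin n)} {p : Fin n × Fin n} :
    p ∈ invSet w ↔ p.1 < p.2 ∧ w p.2 < w p.1 := by
  simp [invSet]

section InsertMax

variable {n : ℕ}

/-- In one-line notation, `insertMax k e` is `e` with the largest value `n` inserted at
position `k`. -/
def insertMax (k : Fin (n + 1)) (e : Perm (Fin n)) : Perm (Fin (n + 1)) :=
  (finSuccEquiv' k).trans ((optionCongr e).trans (finSuccEquiv' (Fin.last n)).symm)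

@[simp] lemma insertMax_apply_self (k : Fin (n + 1)) (e : Perm (Fin n)) :
    insertMax k e k = Fin.last n := by
  simp [insertMax]

@[simp] lemma insertMax_apply_succAbove (k : Fin (n + 1)) (e : Perm (Fin n)) (i : Fin n) :
    insertMax k e (k.succAbove i) = (e i).castSucc := by
  simp [insertMax, Fin.succAbove_last]

lemma insertMax_symm_last (k : Fin (n + 1)) (e : Perm (Fin n)) :
    (insertMax k e).symm (Fin.last n) = k := by
  rw [symm_apply_eq, insertMax_apply_self]

lemma apply_succAbove_symm_last_ne_last (w : Perm (Fin (n + 1))) (i : Fin n) :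
    w ((w.symm (Fin.last n)).succAbove i) ≠ Fin.last n := by
  rw [Ne, ← eq_symm_apply]
  exact Fin.succAbove_ne _ i

noncomputable def eraseMax (w : Perm (Fin (n + 1))) : Perm (Fin n) :=
  Equiv.ofBijective
    (fun i => (w ((w.symm (Fin.last n)).succAbove i)).castPred
      (apply_succAbove_symm_last_ne_last w i))
    (Finite.injective_iff_bijective.mp fun a b h => by
      simpa using congrArg Fin.castSucc h)

lemma castSucc_eraseMax_apply (w : Perm (Fin (n + 1))) (i : Fin n) :
    (eraseMax w i).castSucc = w ((w.symm (Fin.last n)).succAbove i) :=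
  Fin.castSucc_castPred _ (apply_succAbove_symm_last_ne_last w i)

noncomputable def insertMaxEquiv (n : ℕ) : Fin (n + 1) × Perm (Fin n) ≃ Perm (Fin (n + 1)) where
  toFun p := insertMax p.1 p.2
  invFun w := (w.symm (Fin.last n), eraseMax w)
  left_inv := fun ⟨k, e⟩ => by
    refine Prod.ext (insertMax_symm_last k e) (Equiv.ext fun i => ?_)
    apply Fin.castSucc_injective
    simp [castSucc_eraseMax_apply, insertMax_symm_last]
  right_inv w := by
    ext1 x
    rcases Fin.eq_self_or_eq_succAbove (w.symm (Fin.last n)) x with rfl | ⟨i, rfl⟩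
    · simp
    · simp [castSucc_eraseMax_apply]

/-- The value `n` at position `k` exceeds every later entry and is exceeded by no earlier one. -/
lemma invSet_insertMax (k : Fin (n + 1)) (e : Perm (Fin n)) :
    invSet (insertMax k e) =
      ((Ioi k).map (Function.Embedding.sectR k _)).disjUnion
        ((invSet e).map (k.succAboveEmb.prodMap k.succAboveEmb)) (by
          simp [disjoint_left, Fin.succAbove_ne]) := by
  ext ⟨a, b⟩
  cases a using Fin.succAboveCases k <;> cases b using Fin.succAboveCases k <;>
    simp [Fin.succAbove_ne, Fin.castSucc_lt_last, Fin.le_last]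

lemma invCount_insertMax (k : Fin (n + 1)) (e : Perm (Fin n)) :
    invCount (n + 1) (insertMax k e) = (n - k) + invCount n e := by
  rw [invCount_eq_card_invSet, invSet_insertMax, card_disjUnion, card_map, card_map, Fin.card_Ioi,
    Nat.add_sub_cancel, invCount_eq_card_invSet]

end InsertMax

lemma qFactorial_succ (q : ℝ) (n : ℕ) :
    qFactorial q (n + 1) = qFactorial q n * ∑ j ∈ range (n + 1), q ^ j :=
  prod_Icc_succ_top (Nat.le_add_left 1 n) _

lemma qFactorial_pos {q : ℝ} (hq : 0 ≤ q) (n : ℕ) : 0 < qFactorial q n :=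
  prod_pos fun m hm => sum_pos' (fun _ _ => pow_nonneg hq _)
    ⟨0, mem_range.mpr (mem_Icc.mp hm).1, by simp⟩

lemma sum_pow_invCount (q : ℝ) (n : ℕ) :
    ∑ w : Perm (Fin n), q ^ invCount n w = qFactorial q n := by
  induction n with
  | zero => simp [qFactorial, invCount]
  | succ n ih =>
    have hinsert : ∑ k : Fin (n + 1), q ^ (n - k : ℕ) = ∑ j ∈ range (n + 1), q ^ j := by
      rw [Fin.sum_univ_eq_sum_range (fun k => q ^ (n - k))]
      simpa using sum_range_reflect (fun j => q ^ j) (n + 1)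
    rw [← (insertMaxEquiv n).sum_comp, Fintype.sum_prod_type_right, qFactorial_succ, ← ih,
      ← hinsert, sum_mul_sum]
    simp [insertMaxEquiv, invCount_insertMax, pow_add, mul_comm]

section AdjacentSwap

variable {n : ℕ} {i j : Fin n}

lemma swap_apply_lt_swap_apply_iff (hij : (j : ℕ) = i + 1) {a b : Fin n}
    (hab : ¬(a = i ∧ b = j)) (hba : ¬(a = j ∧ b = i)) : swap i j a < swap i j b ↔ a < b := by
  simp only [swap_apply_def, Fin.ext_iff, Fin.lt_def] at *
  split_ifs <;> omega

lemma invSet_mul_swap (hij : (j : ℕ) = i + 1) {v : Perm (Fin n)} (h : v i < v j) :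
    invSet (v * swap i j) =
      insert (i, j) ((invSet v).map (prodCongr (swap i j) (swap i j)).toEmbedding) := by
  have hlt : i < j := Fin.lt_def.mpr (by omega)
  ext ⟨a, b⟩
  simp only [mem_insert, mem_map_equiv, mem_invSet, prodCongr_symm, symm_swap, prodCongr_apply,
    Prod.map, Perm.mul_apply, Prod.mk.injEq]
  by_cases hab : a = i ∧ b = j
  · obtain ⟨rfl, rfl⟩ := hab
    simp [h, hlt]
  by_cases hba : a = j ∧ b = i
  · obtain ⟨rfl, rfl⟩ := hba
    simp [h.asymm, hlt.asymm, hlt.ne']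
  rw [swap_apply_lt_swap_apply_iff hij hab hba]
  tauto

lemma invCount_mul_swap (hij : (j : ℕ) = i + 1) {v : Perm (Fin n)} (h : v i < v j) :
    invCount n (v * swap i j) = invCount n v + 1 := by
  have hnotMem : (i, j) ∉ (invSet v).map (prodCongr (swap i j) (swap i j)).toEmbedding := by
    simp [mem_map_equiv, (Fin.lt_def.mpr (by omega) : i < j).asymm]
  rw [invCount_eq_card_invSet, invSet_mul_swap hij h, card_insert_of_notMem hnotMem, card_map,
    invCount_eq_card_invSet]

lemma sum_pow_invCount_descent_eq_mul_ascent (q : ℝ) (hij : (j : ℕ) = i + 1) :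
    ∑ w ∈ univ.filter (fun w : Perm (Fin n) => w j < w i), q ^ invCount n w =
      q * ∑ w ∈ univ.filter (fun w : Perm (Fin n) => w i < w j), q ^ invCount n w := by
  rw [mul_sum]
  refine (sum_equiv (Equiv.mulRight (swap i j)) (fun w => ?_) fun w hw => ?_).symm
  · simp
  · rw [Equiv.coe_mulRight, invCount_mul_swap hij (mem_filter.mp hw).2, pow_succ', mul_comm]

end AdjacentSwap

theorem stmt_12_general (n : ℕ) (q : ℝ) (hq0 : 0 < q)
    (i j : Fin n) (hij : (j : ℕ) = (i : ℕ) + 1) :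
    ∑ w ∈ Finset.univ.filter (fun w : Equiv.Perm (Fin n) => w j < w i), mallows q n w
      = q / (1 + q) := by
  have hne : i ≠ j := fun h => by simp [h] at hij
  have hsplit := sum_filter_add_sum_filter_not univ (fun w : Perm (Fin n) => w j < w i)
    fun w => q ^ invCount n w
  have hasc : univ.filter (fun w : Perm (Fin n) => ¬ w j < w i) =
      univ.filter (fun w : Perm (Fin n) => w i < w j) :=
    filter_congr fun w _ => not_lt.trans (w.injective.ne hne).le_iff_lt
  rw [hasc, sum_pow_invCount] at hsplit
  simp only [mallows, ← sum_div]
  rw [div_eq_div_iff (qFactorial_pos hq0.le n).ne' (by positivity)]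
  linear_combination sum_pow_invCount_descent_eq_mul_ascent q hij + q * hsplit

/-- For `w` Mallows distributed on `S_n` with parameter `0 < q ≤ 1` and any
position `i` with successor `j` (`j = i + 1`), `P(w i > w j) = q/(1+q)`: the descent
indicator at `i` is Bernoulli with parameter `q/(1+q)`. -/
theorem stmt_12 (n : ℕ) (q : ℝ) (hq0 : 0 < q) (hq1 : q ≤ 1)
    (i j : Fin n) (hij : (j : ℕ) = (i : ℕ) + 1) :
    ∑ w ∈ Finset.univ.filter (fun w : Equiv.Perm (Fin n) => w j < w i), mallows q n w
      = q / (1 + q) :=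
  stmt_12_general n q hq0 i j hij
end

section
/- Let w be Mallows distributed on S_n with parameter q > 0 and n >= 2. Then E[des(w) + des(w^{-1})] = 2q(n-1)/(1+q). -/
open Finset Equiv

/-! Writing a letter `k` in front of a permutation of the remaining letters creates exactly `k` new
inversions, so `∑ w, q ^ inv w = [n]_q!`. Right multiplication by the adjacent transposition
`(i i+1)` maps the permutations with an ascent at `i` onto those with a descent at `i` and adds
one inversion, so a descent at `i` has Mallows probability `q / (1 + q)`; summing over the
`n - 1` positions gives `E[des w] = (n - 1) q / (1 + q)`. Finally `w ↦ w⁻¹` preserves the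
inversion count, hence the Mallows measure, so `E[des w⁻¹]` is the same. -/

def inversions {n : ℕ} (w : Perm (Fin n)) : Finset (Fin n × Fin n) :=
  univ.filter fun p => p.1 < p.2 ∧ w p.2 < w p.1

lemma invCount_eq_card_inversions {n : ℕ} (w : Perm (Fin n)) : invCount n w = #(inversions w) :=
  rfl

lemma mem_inversions {n : ℕ} {w : Perm (Fin n)} {p : Fin n × Fin n} :
    p ∈ inversions w ↔ p.1 < p.2 ∧ w p.2 < w p.1 := by
  simp [inversions]

lemma invCount_inv (n : ℕ) (w : Perm (Fin n)) : invCount n w⁻¹ = invCount n w := by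
  refine card_nbij' (fun p => (w⁻¹ p.2, w⁻¹ p.1)) (fun p => (w p.2, w p.1)) ?_ ?_ ?_ ?_ <;>
    simp +contextual [Set.MapsTo, Set.LeftInvOn]

lemma mallows_inv (q : ℝ) (n : ℕ) (w : Perm (Fin n)) : mallows q n w⁻¹ = mallows q n w := by
  rw [mallows, mallows, invCount_inv]

section Insertion

variable {n : ℕ}

lemma cons_succAbove_injective (k : Fin (n + 1)) (e : Perm (Fin n)) :
    Function.Injective (Fin.cons k (k.succAbove ∘ e) : Fin (n + 1) → Fin (n + 1)) :=
  Fin.cons_injective_iff.mpr ⟨fun ⟨i, hi⟩ => Fin.succAbove_ne k (e i) hi,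
    Fin.succAbove_right_injective.comp e.injective⟩

noncomputable def consPerm (k : Fin (n + 1)) (e : Perm (Fin n)) : Perm (Fin (n + 1)) :=
  ofBijective _ (Finite.injective_iff_bijective.mp (cons_succAbove_injective k e))

@[simp] lemma consPerm_zero (k : Fin (n + 1)) (e : Perm (Fin n)) : consPerm k e 0 = k := rfl

@[simp] lemma consPerm_succ (k : Fin (n + 1)) (e : Perm (Fin n)) (i : Fin n) :
    consPerm k e i.succ = k.succAbove (e i) := rfl

lemma consPerm_injective :
    Function.Injective (fun p : Fin (n + 1) × Perm (Fin n) => consPerm p.1 p.2) := by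
  rintro ⟨k, e⟩ ⟨k', e'⟩ h
  have hk : k = k' := by simpa using congrArg (· 0) h
  subst hk
  exact Prod.ext rfl (Perm.ext fun i => by simpa using congrArg (· i.succ) h)

noncomputable def consPermEquiv : Fin (n + 1) × Perm (Fin n) ≃ Perm (Fin (n + 1)) :=
  ofBijective _ <| (Fintype.bijective_iff_injective_and_card _).mpr
    ⟨consPerm_injective, by simp [Fintype.card_perm, Nat.factorial_succ]⟩

lemma invCount_consPerm (k : Fin (n + 1)) (e : Perm (Fin n)) :
    invCount (n + 1) (consPerm k e) = k + invCount n e := by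
  have front_inversions : #{j : Fin n | (e j).castSucc < k} = k := by
    rw [card_filter, Equiv.sum_comp e (fun m : Fin n => if m.castSucc < k then 1 else 0),
      ← card_filter]
    simp only [Fin.lt_def, Fin.val_castSucc]
    rw [Fin.card_filter_val_lt, min_eq_right (Nat.lt_succ_iff.mp k.isLt)]
  simp only [invCount, card_filter, Fintype.sum_prod_type, Fin.sum_univ_succ, consPerm_zero,
    consPerm_succ, Fin.succ_pos, Fin.not_lt_zero, Fin.succ_lt_succ_iff,
    Fin.succAbove_lt_succAbove_iff, Fin.succAbove_lt_iff_castSucc_lt, false_and, true_and,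
    if_false, zero_add]
  rw [← card_filter, front_inversions]

end Insertion

section AdjacentTransposition

variable {m : ℕ} (i : Fin m)

lemma swap_castSucc_succ_lt_iff {a b : Fin (m + 1)} (h₁ : (a, b) ≠ (i.castSucc, i.succ))
    (h₂ : (a, b) ≠ (i.succ, i.castSucc)) :
    swap i.castSucc i.succ a < swap i.castSucc i.succ b ↔ a < b := by
  simp only [ne_eq, Prod.mk.injEq, Fin.ext_iff, Fin.val_castSucc, Fin.val_succ] at h₁ h₂
  simp only [swap_apply_def, Fin.lt_def, Fin.ext_iff, Fin.val_castSucc, Fin.val_succ]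
  split_ifs <;> simp_all <;> omega

lemma invCount_mul_swap_castSucc_succ (w : Perm (Fin (m + 1))) (h : w i.castSucc < w i.succ) :
    invCount (m + 1) (w * swap i.castSucc i.succ) = invCount (m + 1) w + 1 := by
  set s := swap i.castSucc i.succ
  have hcd : i.castSucc < i.succ := Fin.castSucc_lt_succ
  have fresh : (i.castSucc, i.succ) ∉ (inversions w).map (s.prodCongr s).toEmbedding := by
    simp [s, mem_inversions, hcd.not_gt]
  have split : inversions (w * s)
      = cons (i.castSucc, i.succ) ((inversions w).map (s.prodCongr s).toEmbedding) fresh := by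
    ext ⟨a, b⟩
    simp only [mem_cons, mem_map_equiv, mem_inversions]
    by_cases h₁ : (a, b) = (i.castSucc, i.succ)
    · simp_all [s]
    by_cases h₂ : (a, b) = (i.succ, i.castSucc)
    · simp_all [s, h.le]
    simp [s, h₁, swap_castSucc_succ_lt_iff i h₁ h₂]
  rw [invCount_eq_card_inversions, split, card_cons, card_map, invCount_eq_card_inversions]

lemma sum_pow_invCount_filter_desc (q : ℝ) :
    ∑ w : Perm (Fin (m + 1)) with w i.succ < w i.castSucc, q ^ invCount (m + 1) w
      = q * ∑ w : Perm (Fin (m + 1)) with w i.castSucc < w i.succ, q ^ invCount (m + 1) w := by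
  rw [mul_sum]
  refine (sum_equiv (Equiv.mulRight (swap i.castSucc i.succ)) (fun w => ?_) fun w hw => ?_).symm
  · simp
  · rw [coe_mulRight, invCount_mul_swap_castSucc_succ i w (mem_filter.mp hw).2, pow_succ, mul_comm]

lemma one_add_mul_sum_pow_invCount_filter_desc (q : ℝ) :
    (1 + q) * ∑ w : Perm (Fin (m + 1)) with w i.succ < w i.castSucc, q ^ invCount (m + 1) w
      = q * qFactorial q (m + 1) := by
  have asc : ∀ w : Perm (Fin (m + 1)), ¬ w i.succ < w i.castSucc ↔ w i.castSucc < w i.succ :=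
    fun w => not_lt.trans (w.injective.ne Fin.castSucc_lt_succ.ne).le_iff_lt
  rw [← sum_pow_invCount,
    ← sum_filter_add_sum_filter_not univ (fun w => w i.succ < w i.castSucc),
    filter_congr fun w _ => asc w, sum_pow_invCount_filter_desc]
  ring

end AdjacentTransposition

lemma desCount_succ {m : ℕ} (w : Perm (Fin (m + 1))) :
    desCount (m + 1) w = #{i : Fin m | w i.succ < w i.castSucc} := by
  symm
  refine card_bij (fun i _ => (i.castSucc, i.succ)) (fun i hi => ?_) (fun i _ j _ h => ?_) ?_
  · simpa using hi
  · exact Fin.castSucc_injective m (congrArg Prod.fst h)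
  · rintro ⟨a, b⟩ hab
    simp only [mem_filter, mem_univ, true_and] at hab
    obtain ⟨hb, hdesc⟩ := hab
    let i : Fin m := ⟨a, by omega⟩
    have hi : (i.castSucc, i.succ) = (a, b) := Prod.ext rfl (Fin.ext hb.symm)
    obtain ⟨ha, hb⟩ := Prod.mk.inj hi
    exact ⟨i, by simpa [ha, hb] using hdesc, hi⟩

lemma one_add_mul_sum_pow_invCount_mul_desCount (q : ℝ) (m : ℕ) :
    (1 + q) * ∑ w : Perm (Fin (m + 1)), q ^ invCount (m + 1) w * desCount (m + 1) w
      = m * (q * qFactorial q (m + 1)) := by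
  have by_position : ∑ w : Perm (Fin (m + 1)), q ^ invCount (m + 1) w * desCount (m + 1) w
      = ∑ i : Fin m, ∑ w : Perm (Fin (m + 1)) with w i.succ < w i.castSucc,
          q ^ invCount (m + 1) w := by
    simp_rw [desCount_succ, natCast_card_filter, mul_sum, mul_boole, sum_filter]
    exact sum_comm
  rw [by_position, mul_sum]
  simp [one_add_mul_sum_pow_invCount_filter_desc]

/-- For `w` Mallows distributed on `S_n` with parameter `q > 0` and `n ≥ 2`,
`E[des(w) + des(w⁻¹)] = 2q(n-1)/(1+q)`. -/
theorem stmt_13 (n : ℕ) (hn : 2 ≤ n) (q : ℝ) (hq : 0 < q) :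
    ∑ w : Equiv.Perm (Fin n),
        mallows q n w * ((desCount n w : ℝ) + (desCount n w⁻¹ : ℝ))
      = 2 * q * ((n : ℝ) - 1) / (1 + q) := by
  obtain ⟨m, rfl⟩ : ∃ m, n = m + 1 := ⟨n - 1, by omega⟩
  have inv_symm : ∑ w : Perm (Fin (m + 1)), mallows q (m + 1) w * desCount (m + 1) w⁻¹
      = ∑ w : Perm (Fin (m + 1)), mallows q (m + 1) w * desCount (m + 1) w :=
    Fintype.sum_equiv (Equiv.inv _) _ _ fun w => by simp [mallows_inv]
  have hF := (qFactorial_pos hq.le (m + 1)).ne'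
  have key := one_add_mul_sum_pow_invCount_mul_desCount q m
  simp only [mul_add, sum_add_distrib]
  rw [inv_symm]
  simp only [mallows, div_mul_eq_mul_div, ← sum_div]
  push_cast
  field_simp
  linear_combination 2 * key
end
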